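/- Direction (≥) of the STR-EC-LCS recurrence: if d(i,s,k) < n+1 witnessed by Z₂ satisfying Property(i,s,k) and a subsequence of B[1..d(i,s,k)], then either d(i,s,k) = d(i-1,s,k), or there exists 0 ≤ t < r such that d(i,s,k) ≥ j_t, where j_t is the smallest position j > d(i-1,s-1,t) with B[j] = A[i] for which some string Z satisfying Property(i-1,s-1,t) (a subsequence of B[1..d(i-1,s-1,t)]) has overlap(Z·A[i]) = k. -/

import Mathlib

/-- `overlapLen P S` is the length of the longest prefix of `P` that is a suffix of `S`. -/
def overlapLen {α : Type*} [DecidableEq α] (P S : List α) : ℕ :=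
  Nat.findGreatest (fun k => P.take k <:+ S) P.length

/-- `Property A P i s k Z`: Z is a subsequence of A[1..i], Z does not contain P as a
substring, |Z| = s, and overlap(Z) = k. -/
def Property {α : Type*} [DecidableEq α] (A P : List α) (i s k : ℕ) (Z : List α) : Prop :=
  Z.Sublist (A.take i) ∧ ¬ P <:+: Z ∧ Z.length = s ∧ overlapLen P Z = k

/-- `dTab A B P i s k` is the minimum `j` such that some `Z` satisfying
`Property A P i s k` is a subsequence of `B[1..j]`; `|B| + 1` if no such `Z` exists. -/
noncomputable def dTab {α : Type*} [DecidableEq α] (A B P : List α) (i s k : ℕ) : ℕ :=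
  sInf ({j | ∃ Z : List α, Property A P i s k Z ∧ Z.Sublist (B.take j)}
        ∪ {B.length + 1})

/-- `jT A B P i s k t` is the smallest position `j > d(i-1,s-1,t)` in `B` such that
`B[j] = A[i]` and there exists `Z` satisfying `Property(i-1,s-1,t)` that is a
subsequence of `B[1..d(i-1,s-1,t)]` with `overlap(Z·A[i]) = k`; `n+1` if none exists. -/
noncomputable def jT {α : Type*} [DecidableEq α] [Inhabited α]
    (A B P : List α) (i s k t : ℕ) : ℕ :=
  sInf ({j | dTab A B P (i-1) (s-1) t < j ∧ j ≤ B.length ∧ B[j-1]! = A[i-1]! ∧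
          ∃ Z : List α, Property A P (i-1) (s-1) t Z ∧
            Z.Sublist (B.take (dTab A B P (i-1) (s-1) t)) ∧
            overlapLen P (Z ++ [A[i-1]!]) = k}
        ∪ {B.length + 1})

/-!
An optimal witness `Z₂` for `d(i,s,k)` either avoids `A[i]`, and then it also witnesses
`d(i-1,s,k)` (and `d` is antitone in `i`), or it is `Z·A[i]`. In the latter case, in an embedding
of `Z·A[i]` into `B[1..d(i,s,k)]` the last letter must sit exactly at `d(i,s,k)` by minimality,
with `Z` embedded before it, so `d(i-1,s-1,t) < d(i,s,k)` for `t = overlap(Z) < r`. Since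
`overlap(Z·a)` is determined by `overlap(Z)` and `a` (as in the KMP automaton), the witness of
`d(i-1,s-1,t)` extended by `A[i]` has overlap `k` too, so `d(i,s,k)` is a candidate for `j_t`.
-/

namespace List

variable {α : Type*}

theorem sublist_take_sub_one_or [Inhabited α] {Z A : List α} {i : ℕ} (h : Z <+ A.take i) :
    Z <+ A.take (i - 1) ∨ ∃ Z', Z = Z' ++ [A[i - 1]!] ∧ Z' <+ A.take (i - 1) := by
  rcases i with _ | i
  · exact Or.inl h
  rw [take_add_one] at h
  rcases lt_or_ge i A.length with hi | hi
  · rw [getElem?_eq_getElem hi, Option.toList_some] at h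
    obtain ⟨l₁, l₂, rfl, h₁, h₂⟩ := sublist_append_iff.mp h
    rcases sublist_cons_iff.mp h₂ with h₂ | ⟨r, rfl, hr⟩
    · left
      simpa [sublist_nil.mp h₂] using h₁
    · right
      exact ⟨l₁, by simp [sublist_nil.mp hr, hi], h₁⟩
  · rw [getElem?_eq_none hi, Option.toList_none, append_nil] at h
    exact Or.inl h

theorem exists_getElem_eq_and_sublist_take_of_concat_sublist {Z L : List α} {a : α}
    (h : Z ++ [a] <+ L) : ∃ (p : ℕ) (hp : p < L.length), L[p] = a ∧ Z <+ L.take p := by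
  obtain ⟨l₁, l₂, rfl, hZ, ha⟩ := append_sublist_iff.mp h
  obtain ⟨u, v, rfl⟩ := append_of_mem (singleton_sublist.mp ha)
  refine ⟨l₁.length + u.length, by simp, ?_, ?_⟩
  · rw [getElem_append_right (by omega)]
    simp
  · rw [← length_append, ← append_assoc, take_left]
    exact hZ.trans (sublist_append_left _ _)

/-- If `P.take m = t ++ [a]`, then `t` is itself a prefix of `P`. -/
theorem take_suffix_concat_congr {P Z Z' : List α} (a : α)
    (h : ∀ m, P.take m <:+ Z ↔ P.take m <:+ Z') (m : ℕ) :
    P.take m <:+ Z ++ [a] ↔ P.take m <:+ Z' ++ [a] := by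
  simp only [suffix_concat_iff]
  refine or_congr_right (exists_congr fun t => and_congr_right fun ht => ?_)
  have htP : t = P.take t.length :=
    prefix_iff_eq_take.mp ((prefix_append t [a]).trans (ht ▸ take_prefix m P))
  rw [htP, h]

end List

section Overlap

variable {α : Type*} [DecidableEq α] {P S S' Z Z' : List α}

theorem take_overlapLen_suffix (P S : List α) : P.take (overlapLen P S) <:+ S :=
  Nat.findGreatest_spec (P := fun k => P.take k <:+ S) (Nat.zero_le _) (by simp)

theorem overlapLen_lt_length_of_not_infix (h : ¬ P <:+: S) : overlapLen P S < P.length := by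
  refine lt_of_le_of_ne (Nat.findGreatest_le _) fun heq => h ?_
  simpa [heq] using (take_overlapLen_suffix P S).isInfix

/-- Prefixes of `P` that are suffixes of `S` are suffixes of one another. -/
theorem take_suffix_iff_suffix_take_overlapLen (m : ℕ) :
    P.take m <:+ S ↔ P.take m <:+ P.take (overlapLen P S) := by
  refine ⟨fun h => ?_, fun h => h.trans (take_overlapLen_suffix P S)⟩
  have hle : min m P.length ≤ overlapLen P S :=
    Nat.le_findGreatest (min_le_right _ _) (List.take_eq_take_min ▸ h)
  refine List.suffix_of_suffix_length_le h (take_overlapLen_suffix P S) ?_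
  simp only [List.length_take]
  omega

theorem overlapLen_congr (h : ∀ m, P.take m <:+ S ↔ P.take m <:+ S') :
    overlapLen P S = overlapLen P S' := by
  simp only [overlapLen, h]

theorem overlapLen_concat_congr (a : α) (h : overlapLen P Z = overlapLen P Z') :
    overlapLen P (Z ++ [a]) = overlapLen P (Z' ++ [a]) :=
  overlapLen_congr <| List.take_suffix_concat_congr a fun m => by
    rw [take_suffix_iff_suffix_take_overlapLen (S := Z),
      take_suffix_iff_suffix_take_overlapLen (S := Z'), h]

end Overlap

section Table

variable {α : Type*} [DecidableEq α] {A B P Z : List α} {i i' s k j : ℕ}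

theorem Property.mono (h : Property A P i s k Z) (hi : i ≤ i') : Property A P i' s k Z :=
  ⟨h.1.trans (List.take_sublist_take_left hi), h.2⟩

theorem Property.of_concat {a : α} (h : Property A P i s k (Z ++ [a]))
    (hZ : Z.Sublist (A.take (i - 1))) : Property A P (i - 1) (s - 1) (overlapLen P Z) Z :=
  ⟨hZ, fun hP => h.2.1 (hP.trans (List.prefix_append _ _).isInfix), by simp [← h.2.2.1], rfl⟩

theorem dTab_le (h : Property A P i s k Z) (hZ : Z.Sublist (B.take j)) : dTab A B P i s k ≤ j :=
  Nat.sInf_le (Or.inl ⟨Z, h, hZ⟩)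

theorem dTab_le_length_add_one : dTab A B P i s k ≤ B.length + 1 :=
  Nat.sInf_le (Or.inr rfl)

theorem exists_property_sublist_take_dTab (h : dTab A B P i s k < B.length + 1) :
    ∃ Z, Property A P i s k Z ∧ Z.Sublist (B.take (dTab A B P i s k)) := by
  rcases Nat.sInf_mem (s := {j | ∃ Z : List α, Property A P i s k Z ∧ Z.Sublist (B.take j)} ∪
    {B.length + 1}) ⟨_, Or.inr rfl⟩ with hZ | hn
  · exact hZ
  · exact absurd hn h.ne

theorem dTab_antitone (hi : i ≤ i') : dTab A B P i' s k ≤ dTab A B P i s k := by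
  rcases (dTab_le_length_add_one : dTab A B P i s k ≤ _).lt_or_eq with hlt | heq
  · obtain ⟨Z, hZ, hZB⟩ := exists_property_sublist_take_dTab hlt
    exact dTab_le (hZ.mono hi) hZB
  · exact heq ▸ dTab_le_length_add_one

theorem jT_overlapLen_le_dTab [Inhabited α] (hprop : Property A P i s k (Z ++ [A[i - 1]!]))
    (hZA : Z.Sublist (A.take (i - 1)))
    (hZB : (Z ++ [A[i - 1]!]).Sublist (B.take (dTab A B P i s k))) :
    jT A B P i s k (overlapLen P Z) ≤ dTab A B P i s k := by
  set a := A[i - 1]!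
  set d := dTab A B P i s k
  obtain ⟨p, hpd, hBp, hZp⟩ := List.exists_getElem_eq_and_sublist_take_of_concat_sublist hZB
  simp only [List.length_take, lt_min_iff, List.getElem_take, List.take_take] at hpd hBp hZp
  rw [min_eq_left hpd.1.le] at hZp
  have hd : d = p + 1 := by
    refine le_antisymm (dTab_le hprop ?_) hpd.1
    rw [List.take_succ_eq_append_getElem hpd.2, hBp]
    exact hZp.append (List.Sublist.refl _)
  have hd' : dTab A B P (i - 1) (s - 1) (overlapLen P Z) ≤ p := dTab_le (hprop.of_concat hZA) hZp
  obtain ⟨Z', hZ', hZ'B⟩ := exists_property_sublist_take_dTab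
    (by omega : dTab A B P (i - 1) (s - 1) (overlapLen P Z) < B.length + 1)
  refine Nat.sInf_le (Or.inl ⟨by omega, by omega, ?_, Z', hZ', hZ'B, ?_⟩)
  · simp [hd, hpd.2, hBp, a]
  · rw [overlapLen_concat_congr a hZ'.2.2.2, hprop.2.2.2]

end Table

theorem stmt_13_general {α : Type*} [DecidableEq α] [Inhabited α] (A B P : List α)
    (i s k : ℕ) (Z₂ : List α)
    (hprop : Property A P i s k Z₂)
    (hZB : Z₂.Sublist (B.take (dTab A B P i s k))) :
    dTab A B P i s k = dTab A B P (i-1) s k ∨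
      ∃ t < P.length, jT A B P i s k t ≤ dTab A B P i s k := by
  rcases List.sublist_take_sub_one_or hprop.1 with hZA | ⟨Z, rfl, hZA⟩
  · exact Or.inl <| le_antisymm (dTab_antitone (Nat.sub_le i 1)) (dTab_le ⟨hZA, hprop.2⟩ hZB)
  · exact Or.inr ⟨_, overlapLen_lt_length_of_not_infix (hprop.of_concat hZA).2.1,
      jT_overlapLen_le_dTab hprop hZA hZB⟩

/-- direction (≥) of the STR-EC-LCS recurrence: if d(i,s,k) < n+1,
witnessed by Z₂, then either d(i,s,k) = d(i-1,s,k) or some t < r has j_t ≤ d(i,s,k). -/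
theorem stmt_13 {α : Type*} [DecidableEq α] [Inhabited α] (A B P : List α)
    (i s k : ℕ) (Z₂ : List α)
    (hi : 1 ≤ i) (him : i ≤ A.length) (hs : 1 ≤ s) (hk : k < P.length)
    (hfin : dTab A B P i s k < B.length + 1)
    (hprop : Property A P i s k Z₂)
    (hZB : Z₂.Sublist (B.take (dTab A B P i s k))) :
    dTab A B P i s k = dTab A B P (i-1) s k ∨
      ∃ t < P.length, jT A B P i s k t ≤ dTab A B P i s k :=
  stmt_13_general A B P i s k Z₂ hprop hZB
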